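/- Let n ≥ 2 be a natural number, A and B real n×n matrices, and M := A + iB the corresponding complex n×n matrix. Set β := (q(A) + q(B))/n. Then |det M| ≤ β^(n/2). -/

import Mathlib

/-!
`|det M|² = det (M Mᴴ)` is the product of the eigenvalues of the positive semidefinite matrix
`M Mᴴ`, and their sum is `tr (M Mᴴ) = ∑ |M i j|² = q(A) + q(B)`. AM-GM bounds the product of the
eigenvalues by the `n`-th power of their mean, which is `β`.
-/

open Finset
open scoped ComplexOrder

theorem Finset.prod_le_sum_div_card_pow {ι : Type*} (s : Finset ι) (z : ι → ℝ)
    (hz : ∀ i ∈ s, 0 ≤ z i) : ∏ i ∈ s, z i ≤ ((∑ i ∈ s, z i) / #s) ^ #s := by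
  rcases s.eq_empty_or_nonempty with rfl | hs
  · simp
  have hcard : (0 : ℝ) < #s := by exact_mod_cast hs.card_pos
  have amgm := Real.geom_mean_le_arith_mean s (fun _ ↦ 1) z (fun _ _ ↦ zero_le_one)
    (by simpa using hcard) hz
  simp only [Real.rpow_one, sum_const, nsmul_eq_mul, mul_one, one_mul] at amgm
  rw [Real.rpow_inv_le_iff_of_pos (prod_nonneg hz) (div_nonneg (sum_nonneg hz) hcard.le) hcard,
    Real.rpow_natCast] at amgm
  exact amgm

namespace Matrix

variable {n 𝕜 : Type*} [Fintype n] [RCLike 𝕜]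

theorem re_trace_mul_conjTranspose (M : Matrix n n 𝕜) :
    RCLike.re (M * Mᴴ).trace = ∑ i, ∑ j, ‖M i j‖ ^ 2 := by
  simp only [trace, diag, mul_apply, conjTranspose_apply, RCLike.star_def, RCLike.mul_conj,
    ← RCLike.ofReal_pow, ← RCLike.ofReal_sum, RCLike.ofReal_re]

variable [DecidableEq n]

theorem PosSemidef.re_det_le_re_trace_div_card_pow {P : Matrix n n 𝕜}
    (hP : P.PosSemidef) :
    RCLike.re P.det ≤ (RCLike.re P.trace / Fintype.card n) ^ Fintype.card n := by
  rw [hP.isHermitian.det_eq_prod_eigenvalues, hP.isHermitian.trace_eq_sum_eigenvalues,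
    ← RCLike.ofReal_prod, ← RCLike.ofReal_sum, RCLike.ofReal_re, RCLike.ofReal_re]
  exact prod_le_sum_div_card_pow univ _ fun i _ ↦ hP.eigenvalues_nonneg i

theorem norm_det_sq_eq_re_det_mul_conjTranspose (M : Matrix n n 𝕜) :
    ‖M.det‖ ^ 2 = RCLike.re (M * Mᴴ).det := by
  rw [det_mul, det_conjTranspose, RCLike.star_def, RCLike.mul_conj, ← RCLike.ofReal_pow,
    RCLike.ofReal_re]

theorem norm_det_le_sum_norm_sq_div_card_rpow (M : Matrix n n 𝕜) :
    ‖M.det‖ ≤ ((∑ i, ∑ j, ‖M i j‖ ^ 2) / Fintype.card n) ^ ((Fintype.card n : ℝ) / 2) := by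
  have hsq : ‖M.det‖ ^ 2 ≤ ((∑ i, ∑ j, ‖M i j‖ ^ 2) / Fintype.card n) ^ Fintype.card n := by
    rw [norm_det_sq_eq_re_det_mul_conjTranspose, ← re_trace_mul_conjTranspose]
    exact (posSemidef_self_mul_conjTranspose M).re_det_le_re_trace_div_card_pow
  have hS : 0 ≤ (∑ i, ∑ j, ‖M i j‖ ^ 2) / Fintype.card n := by positivity
  refine le_of_pow_le_pow_left₀ two_ne_zero (by positivity) ?_
  rwa [← Real.rpow_mul_natCast hS, Nat.cast_ofNat, div_mul_cancel₀ _ two_ne_zero,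
    Real.rpow_natCast]

end Matrix

theorem Complex.norm_sq_ofReal_add_I_smul (a b : ℝ) :
    ‖(a : ℂ) + I • (b : ℂ)‖ ^ 2 = a ^ 2 + b ^ 2 := by
  rw [Complex.sq_norm, smul_eq_mul, mul_comm, Complex.normSq_add_mul_I]

theorem abs_det_complex_le_beta_pow_general (n : ℕ)
    (A B : Matrix (Fin n) (Fin n) ℝ)
    (M : Matrix (Fin n) (Fin n) ℂ)
    (hM : M = A.map (fun a => (a : ℂ)) + Complex.I • B.map (fun b => (b : ℂ)))
    (β : ℝ)
    (hβ : β = ((∑ i, ∑ j, (A i j) ^ 2) + (∑ i, ∑ j, (B i j) ^ 2)) / n) :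
    ‖M.det‖ ≤ β ^ ((n : ℝ) / 2) := by
  have hq : ∑ i, ∑ j, ‖M i j‖ ^ 2 = (∑ i, ∑ j, (A i j) ^ 2) + (∑ i, ∑ j, (B i j) ^ 2) := by
    simp only [hM, Matrix.add_apply, Matrix.smul_apply, Matrix.map_apply,
      Complex.norm_sq_ofReal_add_I_smul, sum_add_distrib]
  simpa only [hβ, ← hq, Fintype.card_fin] using M.norm_det_le_sum_norm_sq_div_card_rpow

theorem abs_det_complex_le_beta_pow (n : ℕ) (hn : 2 ≤ n)
    (A B : Matrix (Fin n) (Fin n) ℝ)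
    (M : Matrix (Fin n) (Fin n) ℂ)
    (hM : M = A.map (fun a => (a : ℂ)) + Complex.I • B.map (fun b => (b : ℂ)))
    (β : ℝ)
    (hβ : β = ((∑ i, ∑ j, (A i j) ^ 2) + (∑ i, ∑ j, (B i j) ^ 2)) / n) :
    ‖M.det‖ ≤ β ^ ((n : ℝ) / 2) :=
  abs_det_complex_le_beta_pow_general n A B M hM β hβ
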